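/- arXiv:2507.23651 — 2 statements merged into one kernel-verified Lean document; each statement's English description precedes it below -/
import Mathlib

section
/- Let K have a DFD (u_λ, v_λ, κ_λ) and suppose x† lies in the source set M_{φ,E} = { x : Σ_λ [φ(κ_λ²)]^{-1} |⟨x,u_λ⟩|² ≤ E² }. If the filter satisfies sup_μ |1 − μ g_α(μ)| √φ(μ) ≤ γ₂ √φ(α), then the approximation error satisfies ‖x_α − x†‖ ≤ (γ₂/√A_u) √φ(α) · E, where x_α = Σ_λ κ_λ g_α(κ_λ²)⟨Kx†, v_λ⟩ ū_λ and A_u is the lower frame bound of {u_λ}. -/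
open scoped RealInnerProductSpace

/-- Approximation-error bound under the general DFD source condition
x† ∈ M_{φ,E}: if sup_μ |1 − μ g_α(μ)| √φ(μ) ≤ γ₂ √φ(α), then
‖x_α − x†‖ ≤ (γ₂/√A_u) √φ(α) E. -/
theorem stmt_10 {X Y : Type*}
    [NormedAddCommGroup X] [InnerProductSpace ℝ X] [CompleteSpace X]
    [NormedAddCommGroup Y] [InnerProductSpace ℝ Y] [CompleteSpace Y]
    {Λ : Type*} [Countable Λ]
    (Kop : X →L[ℝ] Y) (u ubar : Λ → X) (v : Λ → Y) (κ : Λ → ℝ) (g φ : ℝ → ℝ)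
    (Au γ₂ α E : ℝ) (hAu : 0 < Au) (hγ₂ : 0 < γ₂) (hα : 0 < α) (hE : 0 < E)
    (hκ : ∀ lam, 0 < κ lam)
    (hφpos : ∀ μ : ℝ, 0 < μ → 0 < φ μ)
    (hDFD : ∀ lam, ContinuousLinearMap.adjoint Kop (v lam) = κ lam • u lam)
    -- dual-frame synthesis bound with constant A_u^{-1/2}
    (hsynth : ∀ a : Λ → ℝ, Summable (fun lam => a lam ^ 2) →
      ∀ s : X, HasSum (fun lam => a lam • ubar lam) s →
        ‖s‖ ≤ (Real.sqrt Au)⁻¹ * Real.sqrt (∑' lam, a lam ^ 2))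
    (hfilter : ∀ μ : ℝ, 0 ≤ μ →
      |1 - μ * g μ| * Real.sqrt (φ μ) ≤ γ₂ * Real.sqrt (φ α))
    (xdag xa : X)
    -- source condition x† ∈ M_{φ,E}
    (hsource : ∑' lam, (φ (κ lam ^ 2))⁻¹ * ⟪xdag, u lam⟫ ^ 2 ≤ E ^ 2)
    (hsourceSummable : Summable (fun lam => (φ (κ lam ^ 2))⁻¹ * ⟪xdag, u lam⟫ ^ 2))
    -- dual frame reconstruction of x†
    (hrecon : HasSum (fun lam => ⟪xdag, u lam⟫ • ubar lam) xdag)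
    (hxa : HasSum
      (fun lam => (κ lam * g (κ lam ^ 2) * ⟪Kop xdag, v lam⟫) • ubar lam) xa) :
    ‖xa - xdag‖ ≤ γ₂ / Real.sqrt Au * Real.sqrt (φ α) * E := by
  set a : Λ → ℝ := fun lam => (κ lam ^ 2 * g (κ lam ^ 2) - 1) * ⟪xdag, u lam⟫ with ha
  have hKv : ∀ lam, ⟪Kop xdag, v lam⟫ = κ lam * ⟪xdag, u lam⟫ := by
    intro lam
    have := ContinuousLinearMap.adjoint_inner_right Kop xdag (v lam)
    rw [hDFD lam] at this
    rw [← this, real_inner_smul_right]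
  have hsum : HasSum (fun lam => a lam • ubar lam) (xa - xdag) := by
    have := hxa.sub hrecon
    convert this using 2 with lam
    rw [hKv lam]; simp only [ha]
    rw [← sub_smul]; ring_nf
  have hφκ : ∀ lam, 0 < φ (κ lam ^ 2) := fun lam => hφpos _ (pow_pos (hκ lam) 2)
  have hbound : ∀ lam, a lam ^ 2 ≤ γ₂ ^ 2 * φ α * ((φ (κ lam ^ 2))⁻¹ * ⟪xdag, u lam⟫ ^ 2) := by
    intro lam
    have hf := hfilter (κ lam ^ 2) (sq_nonneg _)
    have hsq : (1 - κ lam ^ 2 * g (κ lam ^ 2)) ^ 2 * φ (κ lam ^ 2) ≤ γ₂ ^ 2 * φ α := by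
      have h1 : (|1 - κ lam ^ 2 * g (κ lam ^ 2)| * Real.sqrt (φ (κ lam ^ 2))) ^ 2 ≤
          (γ₂ * Real.sqrt (φ α)) ^ 2 := by
        apply pow_le_pow_left₀ (by positivity) hf
      rw [mul_pow, mul_pow, sq_abs, Real.sq_sqrt (hφκ lam).le,
        Real.sq_sqrt (hφpos α hα).le] at h1
      exact h1
    have hc : φ (κ lam ^ 2) * ((φ (κ lam ^ 2))⁻¹ * ⟪xdag, u lam⟫ ^ 2) = ⟪xdag, u lam⟫ ^ 2 := by
      rw [← mul_assoc, mul_inv_cancel₀ (hφκ lam).ne', one_mul]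
    have key : a lam ^ 2 = ((1 - κ lam ^ 2 * g (κ lam ^ 2)) ^ 2 * φ (κ lam ^ 2)) *
        ((φ (κ lam ^ 2))⁻¹ * ⟪xdag, u lam⟫ ^ 2) := by
      rw [mul_assoc, hc]; simp only [ha]; ring
    rw [key]
    exact mul_le_mul_of_nonneg_right hsq
      (mul_nonneg (inv_nonneg.mpr (hφκ lam).le) (sq_nonneg _))
  have hS : Summable (fun lam => a lam ^ 2) := by
    apply Summable.of_nonneg_of_le (fun lam => sq_nonneg _) hbound
    exact (hsourceSummable.mul_left _)
  have htsum : ∑' lam, a lam ^ 2 ≤ γ₂ ^ 2 * φ α * E ^ 2 := by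
    calc ∑' lam, a lam ^ 2 ≤ ∑' lam, γ₂ ^ 2 * φ α * ((φ (κ lam ^ 2))⁻¹ * ⟪xdag, u lam⟫ ^ 2) :=
          Summable.tsum_le_tsum hbound hS (hsourceSummable.mul_left _)
      _ = γ₂ ^ 2 * φ α * ∑' lam, (φ (κ lam ^ 2))⁻¹ * ⟪xdag, u lam⟫ ^ 2 := tsum_mul_left
      _ ≤ γ₂ ^ 2 * φ α * E ^ 2 := by
          exact mul_le_mul_of_nonneg_left hsource (mul_nonneg (sq_nonneg _) (hφpos α hα).le)
  have := hsynth a hS (xa - xdag) hsum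
  refine this.trans ?_
  have h2 : Real.sqrt (∑' lam, a lam ^ 2) ≤ γ₂ * Real.sqrt (φ α) * E := by
    have := Real.sqrt_le_sqrt htsum
    refine this.trans_eq ?_
    rw [show γ₂ ^ 2 * φ α * E ^ 2 = (γ₂ * Real.sqrt (φ α) * E) ^ 2 by
      rw [mul_pow, mul_pow, Real.sq_sqrt (hφpos α hα).le]]
    exact Real.sqrt_sq (by positivity)
  calc (Real.sqrt Au)⁻¹ * Real.sqrt (∑' lam, a lam ^ 2)
      ≤ (Real.sqrt Au)⁻¹ * (γ₂ * Real.sqrt (φ α) * E) := by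
        apply mul_le_mul_of_nonneg_left h2 (by positivity)
    _ = γ₂ / Real.sqrt Au * Real.sqrt (φ α) * E := by
        field_simp
end

section
/- Let φ satisfy Assumption A1 (continuous, strictly increasing on (0,a*), φ(0+)=0, with Θ(μ)=μφ^{-1}(μ) convex) and let (u_λ, v_λ, κ_λ) be a DFD of K with {u_λ} minimal with biorthogonal dual {ū_λ}. Fix ν∈Λ and set x_ν := E √φ(κ_ν²) ū_ν. Then x_ν belongs to the source set M_{φ,E} = {x : Σ_λ [φ(κ_λ²)]^{-1}|⟨x,u_λ⟩|² ≤ E²}, and ‖K x_ν‖ ≤ |v|_inf^{-1} E √(κ_ν² φ(κ_ν²)), while ‖x_ν‖ ≥ B_u^{-1/2} E √φ(κ_ν²). -/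
open scoped RealInnerProductSpace

/-- The extremal elements x_ν = E √φ(κ_ν²) ū_ν lie in the source set M_{φ,E},
with ‖K x_ν‖ ≤ |v|_inf⁻¹ E √(κ_ν² φ(κ_ν²)) and ‖x_ν‖ ≥ B_u^{-1/2} E √φ(κ_ν²). -/
theorem stmt_14 {X Y : Type*}
    [NormedAddCommGroup X] [InnerProductSpace ℝ X] [CompleteSpace X]
    [NormedAddCommGroup Y] [InnerProductSpace ℝ Y] [CompleteSpace Y]
    {Λ : Type*} [Countable Λ] [DecidableEq Λ]
    (Kop : X →L[ℝ] Y) (u ubar : Λ → X) (v : Λ → Y) (κ : Λ → ℝ) (φ : ℝ → ℝ)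
    (Bu vinf E : ℝ) (hBu : 0 < Bu) (hvinf : 0 < vinf) (hE : 0 < E)
    (hκ : ∀ lam, 0 < κ lam)
    (hφpos : ∀ μ : ℝ, 0 < μ → 0 < φ μ)
    (hDFD : ∀ lam, ContinuousLinearMap.adjoint Kop (v lam) = κ lam • u lam)
    -- minimality: biorthogonality of {u_λ} and {ū_λ}
    (hbiorth : ∀ lam nu, ⟪ubar nu, u lam⟫ = if lam = nu then (1:ℝ) else 0)
    -- upper frame bound of {u_λ}
    (huframe : ∀ x : X, ∑' lam, ⟪x, u lam⟫ ^ 2 ≤ Bu * ‖x‖ ^ 2)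
    -- lower analysis bound |v|_inf of {v_λ} on the closure of ran K
    (hvinfbound : ∀ h ∈ closure (Set.range Kop),
      vinf ^ 2 * ‖h‖ ^ 2 ≤ ∑' lam, ⟪h, v lam⟫ ^ 2)
    (nu : Λ) (xnu : X)
    (hxnu : xnu = (E * Real.sqrt (φ (κ nu ^ 2))) • ubar nu) :
    (∑' lam, (φ (κ lam ^ 2))⁻¹ * ⟪xnu, u lam⟫ ^ 2 ≤ E ^ 2) ∧
    ‖Kop xnu‖ ≤ vinf⁻¹ * E * Real.sqrt (κ nu ^ 2 * φ (κ nu ^ 2)) ∧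
    (Real.sqrt Bu)⁻¹ * E * Real.sqrt (φ (κ nu ^ 2)) ≤ ‖xnu‖ := by
  set c := E * Real.sqrt (φ (κ nu ^ 2)) with hc
  have hφν : 0 < φ (κ nu ^ 2) := hφpos _ (pow_pos (hκ nu) 2)
  have hcpos : 0 < c := mul_pos hE (Real.sqrt_pos.mpr hφν)
  have hc2 : c ^ 2 = E ^ 2 * φ (κ nu ^ 2) := by
    rw [mul_pow, Real.sq_sqrt hφν.le]
  have hin : ∀ lam, ⟪xnu, u lam⟫ = if lam = nu then c else 0 := by
    intro lam
    rw [hxnu, real_inner_smul_left, hbiorth]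
    split <;> simp
  -- first claim
  have h1 : ∑' lam, (φ (κ lam ^ 2))⁻¹ * ⟪xnu, u lam⟫ ^ 2 = E ^ 2 := by
    have : (fun lam => (φ (κ lam ^ 2))⁻¹ * ⟪xnu, u lam⟫ ^ 2)
        = fun lam => if lam = nu then E ^ 2 else 0 := by
      funext lam
      rw [hin lam]
      split
      · rename_i h; subst h
        rw [hc2]
        field_simp
      · simp
    rw [this, tsum_ite_eq]
  have hsum2 : ∑' lam, ⟪xnu, u lam⟫ ^ 2 = c ^ 2 := by
    have : (fun lam => ⟪xnu, u lam⟫ ^ 2) = fun lam => if lam = nu then c ^ 2 else 0 := by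
      funext lam
      rw [hin lam]
      split <;> simp
    rw [this, tsum_ite_eq]
  refine ⟨h1.le, ?_, ?_⟩
  · -- second claim
    have hKv : ∀ lam, ⟪Kop xnu, v lam⟫ = κ lam * ⟪xnu, u lam⟫ := by
      intro lam
      rw [real_inner_comm, ← ContinuousLinearMap.adjoint_inner_left, hDFD,
        real_inner_smul_left, real_inner_comm]
    have hsumK : ∑' lam, ⟪Kop xnu, v lam⟫ ^ 2 = κ nu ^ 2 * c ^ 2 := by
      have : (fun lam => ⟪Kop xnu, v lam⟫ ^ 2)
          = fun lam => if lam = nu then κ nu ^ 2 * c ^ 2 else 0 := by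
        funext lam
        rw [hKv lam, hin lam]
        split
        · rename_i h; subst h; ring
        · simp
      rw [this, tsum_ite_eq]
    have hmem : Kop xnu ∈ closure (Set.range Kop) :=
      subset_closure ⟨xnu, rfl⟩
    have hb := hvinfbound _ hmem
    rw [hsumK] at hb
    have hle : ‖Kop xnu‖ ^ 2 ≤ (vinf⁻¹ * E * Real.sqrt (κ nu ^ 2 * φ (κ nu ^ 2))) ^ 2 := by
      have hrhs : (vinf⁻¹ * E * Real.sqrt (κ nu ^ 2 * φ (κ nu ^ 2))) ^ 2
          = vinf⁻¹ ^ 2 * (κ nu ^ 2 * c ^ 2) := by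
        rw [mul_pow, mul_pow, Real.sq_sqrt (by positivity), hc2]; ring
      rw [hrhs]
      rw [← sub_nonneg] at hb ⊢
      have : vinf⁻¹ ^ 2 * (κ nu ^ 2 * c ^ 2) - ‖Kop xnu‖ ^ 2
          = vinf⁻¹ ^ 2 * (κ nu ^ 2 * c ^ 2 - vinf ^ 2 * ‖Kop xnu‖ ^ 2) := by
        field_simp
      rw [this]
      have h2 : (0:ℝ) ≤ κ nu ^ 2 * c ^ 2 - vinf ^ 2 * ‖Kop xnu‖ ^ 2 := by linarith
      positivity
    calc ‖Kop xnu‖ = Real.sqrt (‖Kop xnu‖ ^ 2) := by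
          rw [Real.sqrt_sq (norm_nonneg _)]
      _ ≤ Real.sqrt ((vinf⁻¹ * E * Real.sqrt (κ nu ^ 2 * φ (κ nu ^ 2))) ^ 2) :=
          Real.sqrt_le_sqrt hle
      _ = vinf⁻¹ * E * Real.sqrt (κ nu ^ 2 * φ (κ nu ^ 2)) := by
          rw [Real.sqrt_sq (by positivity)]
  · -- third claim
    have hf := huframe xnu
    rw [hsum2] at hf
    have hle : ((Real.sqrt Bu)⁻¹ * E * Real.sqrt (φ (κ nu ^ 2))) ^ 2 ≤ ‖xnu‖ ^ 2 := by
      have : ((Real.sqrt Bu)⁻¹ * E * Real.sqrt (φ (κ nu ^ 2))) ^ 2 = Bu⁻¹ * c ^ 2 := by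
        rw [mul_pow, mul_pow, Real.sq_sqrt hφν.le, ← Real.sqrt_inv,
          Real.sq_sqrt (by positivity), hc2]
        ring
      rw [this]
      rw [inv_mul_le_iff₀ hBu]
      linarith
    calc (Real.sqrt Bu)⁻¹ * E * Real.sqrt (φ (κ nu ^ 2))
        = Real.sqrt (((Real.sqrt Bu)⁻¹ * E * Real.sqrt (φ (κ nu ^ 2))) ^ 2) := by
          rw [Real.sqrt_sq (by positivity)]
      _ ≤ Real.sqrt (‖xnu‖ ^ 2) := Real.sqrt_le_sqrt hle
      _ = ‖xnu‖ := Real.sqrt_sq (norm_nonneg _)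
end
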